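/- Residue property of the Izergin determinant: as z′ → z, K_{n+1}^{(l)}({x̄, z} | {ȳ, z′}) = f(z, z′)·f(z, ȳ)·f(x̄, z)·K_n^{(l)}(x̄ | ȳ) + (terms regular at z′ = z), where f(u,v) = (qu − q⁻¹v)/(u−v). Equivalently, the residue of K_{n+1}^{(l)}({x̄,z}|{ȳ,z′}) at z′ = z, as a function of z′, equals −z(q−q⁻¹)·f(z,ȳ)·f(x̄,z)·K_n^{(l)}(x̄|ȳ). -/

import Mathlib

open Finset

/-- The (trigonometric) Izergin determinant `K_k(x̄|ȳ)`. -/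
noncomputable def izK (q : ℂ) {ι : Type} [Fintype ι] [LinearOrder ι] [DecidableEq ι]
    (x y : ι → ℂ) : ℂ :=
  ((∏ i, ∏ j, (q * x i - q⁻¹ * y j)) /
      ((∏ i, ∏ j, if i < j then x i - x j else 1) *
        (∏ i, ∏ j, if i < j then y j - y i else 1))) *
    Matrix.det (Matrix.of fun i j => (q - q⁻¹) / ((x i - y j) * (q * x i - q⁻¹ * y j)))

/-- The left modified Izergin determinant `K^{(l)}`. -/
noncomputable def Kl (q : ℂ) {ι : Type} [Fintype ι] [LinearOrder ι] [DecidableEq ι]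
    (x y : ι → ℂ) : ℂ :=
  (∏ i, x i) * izK q x y

/-- The right modified Izergin determinant `K^{(r)}`. -/
noncomputable def Kr (q : ℂ) {ι : Type} [Fintype ι] [LinearOrder ι] [DecidableEq ι]
    (x y : ι → ℂ) : ℂ :=
  (∏ i, y i) * izK q x y

/-- The function `f(u,v) = (qu - q⁻¹v)/(u-v)`. -/
noncomputable def ff (q u v : ℂ) : ℂ := (q * u - q⁻¹ * v) / (u - v)

/-- The function `g(u,v) = (q - q⁻¹)/(u-v)`. -/
noncomputable def gg (q u v : ℂ) : ℂ := (q - q⁻¹) / (u - v)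

/-- The product `f(x̄,ȳ) = ∏_{i,j} f(x_i, y_j)`. -/
noncomputable def fS (q : ℂ) {ι κ : Type} [Fintype ι] [Fintype κ]
    (x : ι → ℂ) (y : κ → ℂ) : ℂ :=
  ∏ i, ∏ j, ff q (x i) (y j)

/-- The subfamily of `w` indexed (in increasing order) by a subset `S` of cardinality `k`. -/
noncomputable def part {N k : ℕ} (S : Finset (Fin N)) (h : S.card = k) (w : Fin N → ℂ) :
    Fin k → ℂ :=
  fun i => w (S.orderIsoOfFin h i).1

lemma card_compl_eq {N k m : ℕ} (hN : N = k + m) (S : Finset (Fin N)) (h : S.card = k) :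
    Sᶜ.card = m := by
  have hc := Finset.card_compl S
  simp only [Fintype.card_fin, h] at hc
  omega

/-- The left highest coefficient `Z^{(l)}_{a,b}(t̄;x̄|s̄;ȳ)`, given by the sum formula
over partitions of `w̄ = {s̄,x̄}` into `w̄_I ⊔ w̄_II` with `#w̄_I = b`. -/
noncomputable def Zl (q : ℂ) {a b : ℕ} (t x : Fin a → ℂ) (s y : Fin b → ℂ) : ℂ :=
  ((-q) ^ b)⁻¹ *
    ∑ S : Finset (Fin (b + a)),
      if h : S.card = b then
        Kr q s (fun i => q ^ 2 * part S h (Fin.append s x) i) *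
          Kl q (part Sᶜ (card_compl_eq rfl S h) (Fin.append s x)) t *
          Kl q y (part S h (Fin.append s x)) *
          fS q (part S h (Fin.append s x)) (part Sᶜ (card_compl_eq rfl S h) (Fin.append s x))
      else 0

/-- The right highest coefficient `Z^{(r)}_{a,b}(t̄;x̄|s̄;ȳ)`. -/
noncomputable def Zr (q : ℂ) {a b : ℕ} (t x : Fin a → ℂ) (s y : Fin b → ℂ) : ℂ :=
  (-q) ^ b *
    ∑ S : Finset (Fin (b + a)),
      if h : S.card = b then
        Kl q s (fun i => q ^ 2 * part S h (Fin.append s x) i) *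
          Kr q (part Sᶜ (card_compl_eq rfl S h) (Fin.append s x)) t *
          Kr q y (part S h (Fin.append s x)) *
          fS q (part S h (Fin.append s x)) (part Sᶜ (card_compl_eq rfl S h) (Fin.append s x))
      else 0

/-!
Multiplying the last column of the Izergin matrix of `({x̄, z} | {ȳ, z'})` by
`(z' - z) ∏ₖ (q Xₖ - q⁻¹ z')`, where `X = {x̄, z}`, absorbs the `z'`-dependent part of the
numerator of the prefactor and makes that column regular at `z' = z`: its entries in the rows of
`x̄` tend to `0`, and the one in the row of `z` tends to `-(q - q⁻¹) ∏ₖ (q xₖ - q⁻¹ z)`.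
Expanding the limiting determinant along the last column leaves the Izergin matrix of `(x̄ | ȳ)`;
what remains of the prefactor is that of `K_n` times `z f(z, ȳ) f(x̄, z)`, up to the factor
`∏ⱼ (z' - yⱼ)⁻¹`, which is continuous at `z' = z`.
-/

open Filter Topology

namespace Fin

variable {M α : Type*} [CommMonoid M] {n : ℕ}

theorem prod_prod_ite_lt_snoc (g : α → α → M) (x : Fin n → α) (a : α) :
    (∏ i : Fin (n + 1), ∏ j : Fin (n + 1),
        if i < j then g ((snoc x a : Fin (n + 1) → α) i) ((snoc x a : Fin (n + 1) → α) j) else 1) =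
      (∏ i, ∏ j, if i < j then g (x i) (x j) else 1) * ∏ i, g (x i) a := by
  simp [prod_univ_castSucc, castSucc_lt_last, (le_last _).not_gt, prod_mul_distrib]

end Fin

namespace Matrix

variable {R : Type*} [CommRing R] {n : ℕ}

theorem det_updateCol_last_single (A : Matrix (Fin (n + 1)) (Fin (n + 1)) R) (c : R) :
    (A.updateCol (Fin.last n) (Pi.single (Fin.last n) c)).det =
      c * (A.submatrix Fin.castSucc Fin.castSucc).det := by
  rw [det_succ_column _ (Fin.last n), Finset.sum_eq_single (Fin.last n)]
  · rw [submatrix_updateCol_succAbove]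
    simp [Fin.succAbove_last]
  · intro i _ hi
    simp [Pi.single_eq_of_ne hi]
  · simp

end Matrix

noncomputable def izEntry (q u v : ℂ) : ℂ := (q - q⁻¹) / ((u - v) * (q * u - q⁻¹ * v))

noncomputable def izMatrix (q : ℂ) {ι : Type} (x y : ι → ℂ) : Matrix ι ι ℂ :=
  Matrix.of fun i j => izEntry q (x i) (y j)

theorem Kl_eq_izMatrix_det (q : ℂ) {ι : Type} [Fintype ι] [LinearOrder ι] [DecidableEq ι] (x y : ι → ℂ) :
    Kl q x y = (∏ i, x i) * (∏ i, ∏ j, (q * x i - q⁻¹ * y j)) /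
      ((∏ i, ∏ j, if i < j then x i - x j else 1) * (∏ i, ∏ j, if i < j then y j - y i else 1)) *
        (izMatrix q x y).det := by
  rw [Kl, izK, mul_div_assoc, mul_assoc]
  rfl

section Snoc

variable {n : ℕ}

theorem izMatrix_snoc_submatrix (q a b : ℂ) (x y : Fin n → ℂ) :
    (izMatrix q (Fin.snoc x a) (Fin.snoc y b)).submatrix Fin.castSucc Fin.castSucc =
      izMatrix q x y := by
  ext i j
  simp [izMatrix]

theorem izMatrix_snoc_updateCol_last (q : ℂ) (x : Fin (n + 1) → ℂ) (y : Fin n → ℂ)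
    (b b' : ℂ) (w : Fin (n + 1) → ℂ) :
    (izMatrix q x (Fin.snoc y b)).updateCol (Fin.last n) w =
      (izMatrix q x (Fin.snoc y b')).updateCol (Fin.last n) w := by
  ext i j
  induction j using Fin.lastCases with
  | last => simp
  | cast j => simp [izMatrix]

noncomputable def residueCol {ι : Type} [Fintype ι] (q z : ℂ) (x : ι → ℂ) (z' : ℂ) (i : ι) : ℂ :=
  (z' - z) * (∏ k, (q * x k - q⁻¹ * z')) * izEntry q (x i) z'

theorem sub_mul_Kl_snoc (q z z' : ℂ) (x y : Fin n → ℂ) :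
    (z' - z) * Kl q (Fin.snoc x z) (Fin.snoc y z') =
      z * (∏ i, x i) * (∏ i, ∏ j, (q * x i - q⁻¹ * y j)) * (∏ j, (q * z - q⁻¹ * y j)) /
        ((∏ i, ∏ j, if i < j then x i - x j else 1) * (∏ i, (x i - z)) *
          (∏ i, ∏ j, if i < j then y j - y i else 1)) * (∏ j, (z' - y j))⁻¹ *
        ((izMatrix q (Fin.snoc x z) (Fin.snoc y z)).updateCol (Fin.last n)
          (residueCol q z (Fin.snoc x z) z')).det := by
  have hcol : residueCol q z (Fin.snoc x z) z' =
      ((z' - z) * ∏ k, (q * (Fin.snoc x z : Fin (n + 1) → ℂ) k - q⁻¹ * z')) •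
      fun i => izMatrix q (Fin.snoc x z) (Fin.snoc y z') i (Fin.last n) := by
    ext i
    simp [residueCol, izMatrix]
  rw [Kl_eq_izMatrix_det, hcol, ← izMatrix_snoc_updateCol_last q _ y z', Matrix.det_updateCol_smul,
    Matrix.updateCol_eq_self, Fin.prod_prod_ite_lt_snoc (fun u v => u - v),
    Fin.prod_prod_ite_lt_snoc (fun u v => v - u)]
  simp only [Fin.prod_univ_castSucc, Fin.snoc_castSucc, Fin.snoc_last, Finset.prod_mul_distrib]
  ring

end Snoc

section Limits

variable {q : ℂ}

theorem eventually_mul_sub_inv_mul_ne_zero (hq : q ≠ 0) (u z : ℂ) :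
    ∀ᶠ z' in 𝓝[≠] z, q * u - q⁻¹ * z' ≠ 0 := by
  have hroot : ∀ z', q * u - q⁻¹ * z' = 0 → z' = q ^ 2 * u := fun z' h => by
    field_simp at h
    linear_combination -h
  rcases eq_or_ne z (q ^ 2 * u) with rfl | hne
  · filter_upwards [self_mem_nhdsWithin] with z' hz' h using hz' (hroot z' h)
  · filter_upwards [eventually_ne_nhdsWithin hne] with z' hz' h using hz' (hroot z' h)

theorem tendsto_sub_mul_izEntry_self (hq : q ≠ 0) {z : ℂ} {p : ℂ → ℂ} (hp : ContinuousAt p z) :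
    Tendsto (fun z' => (z' - z) * (p z' * (q * z - q⁻¹ * z')) * izEntry q z z') (𝓝[≠] z)
      (𝓝 (-(q - q⁻¹) * p z)) := by
  refine ((hp.tendsto.const_mul _).mono_left nhdsWithin_le_nhds).congr' ?_
  filter_upwards [self_mem_nhdsWithin, eventually_mul_sub_inv_mul_ne_zero hq z z]
    with z' hz' hne
  have : z - z' ≠ 0 := sub_ne_zero.mpr (Ne.symm hz')
  rw [izEntry]
  generalize q * z - q⁻¹ * z' = w at hne ⊢
  field_simp
  ring

theorem tendsto_sub_mul_izEntry_of_ne (hq : q ≠ 0) {u z : ℂ} (hu : u ≠ z) {p : ℂ → ℂ}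
    (hp : ContinuousAt p z) :
    Tendsto (fun z' => (z' - z) * ((q * u - q⁻¹ * z') * p z') * izEntry q u z') (𝓝[≠] z)
      (𝓝 0) := by
  have hcont : ContinuousAt (fun z' => (z' - z) * p z' * (q - q⁻¹) / (u - z')) z :=
    (((continuousAt_id.sub continuousAt_const).mul hp).mul continuousAt_const).div
      (continuousAt_const.sub continuousAt_id) (sub_ne_zero.mpr hu)
  have hlim : Tendsto (fun z' => (z' - z) * p z' * (q - q⁻¹) / (u - z')) (𝓝[≠] z) (𝓝 0) := by
    simpa using hcont.tendsto.mono_left nhdsWithin_le_nhds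
  refine hlim.congr' ?_
  filter_upwards [eventually_ne_nhdsWithin hu.symm, eventually_mul_sub_inv_mul_ne_zero hq u z]
    with z' hz' hne
  have : u - z' ≠ 0 := sub_ne_zero.mpr (Ne.symm hz')
  rw [izEntry]
  generalize q * u - q⁻¹ * z' = w at hne ⊢
  field_simp

theorem tendsto_residueCol_snoc (hq : q ≠ 0) {n : ℕ} {z : ℂ} {x : Fin n → ℂ}
    (hzx : ∀ i, z ≠ x i) :
    Tendsto (residueCol q z (Fin.snoc x z)) (𝓝[≠] z)
      (𝓝 (Pi.single (Fin.last n) (-(q - q⁻¹) * ∏ k, (q * x k - q⁻¹ * z)))) := by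
  refine tendsto_pi_nhds.mpr fun i => ?_
  induction i using Fin.lastCases with
  | last =>
    simp only [residueCol, Pi.single_eq_same, Fin.prod_univ_castSucc, Fin.snoc_castSucc,
      Fin.snoc_last]
    exact tendsto_sub_mul_izEntry_self hq (by fun_prop)
  | cast i =>
    simp only [residueCol, Pi.single_eq_of_ne (Fin.castSucc_lt_last i).ne,
      ← Finset.mul_prod_erase _ _ (Finset.mem_univ (Fin.castSucc i)), Fin.snoc_castSucc]
    exact tendsto_sub_mul_izEntry_of_ne hq (hzx i).symm (by fun_prop)

end Limits

open Filter in
theorem izergin_residue_general {n : ℕ} (q z : ℂ) (x y : Fin n → ℂ)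
    (hq : q ≠ 0) (hzx : ∀ i, z ≠ x i) (hzy : ∀ i, z ≠ y i) :
    Tendsto (fun z' : ℂ => (z' - z) * Kl q (Fin.snoc x z) (Fin.snoc y z'))
      (nhdsWithin z {z}ᶜ)
      (nhds (-(z * (q - q⁻¹)) * fS q (fun _ : Fin 1 => z) y *
        fS q x (fun _ : Fin 1 => z) * Kl q x y)) := by
  have hdet : Tendsto (fun z' => ((izMatrix q (Fin.snoc x z) (Fin.snoc y z)).updateCol
      (Fin.last n) (residueCol q z (Fin.snoc x z) z')).det) (𝓝[≠] z)
      (𝓝 (-(q - q⁻¹) * (∏ k, (q * x k - q⁻¹ * z)) * (izMatrix q x y).det)) := by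
    have hcont : Continuous fun v =>
        ((izMatrix q (Fin.snoc x z) (Fin.snoc y z)).updateCol (Fin.last n) v).det :=
      (continuous_const.matrix_updateCol _ continuous_id).matrix_det
    rw [← izMatrix_snoc_submatrix q z z x y, ← Matrix.det_updateCol_last_single]
    exact (hcont.tendsto _).comp (tendsto_residueCol_snoc hq hzx)
  have hprod : Tendsto (fun z' => (∏ j, (z' - y j))⁻¹) (𝓝[≠] z) (𝓝 (∏ j, (z - y j))⁻¹) := by
    refine (Tendsto.inv₀ ?_ ?_).mono_left nhdsWithin_le_nhds
    · exact (continuous_finsetProd _ fun j _ => by fun_prop).tendsto z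
    · exact Finset.prod_ne_zero_iff.mpr fun j _ => sub_ne_zero.mpr (hzy j)
  convert (tendsto_const_nhds.mul hprod).mul hdet using 1
  · exact funext fun z' => sub_mul_Kl_snoc q z z' x y
  · simp only [Kl_eq_izMatrix_det, fS, ff, Finset.univ_unique, Finset.prod_singleton, Finset.prod_div_distrib]
    congr 1
    ring

open Filter in
/-- the residue of `K_{n+1}^{(l)}({x̄,z}|{ȳ,z'})` at `z' = z`, as a function
of `z'`, equals `-z(q-q⁻¹)·f(z,ȳ)·f(x̄,z)·K_n^{(l)}(x̄|ȳ)`. -/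
theorem izergin_residue {n : ℕ} (q z : ℂ) (x y : Fin n → ℂ)
    (hq : q ≠ 0) (hq2 : q ^ 2 ≠ 1)
    (hx : Function.Injective x) (hy : Function.Injective y)
    (hxy : ∀ i j, x i ≠ y j) (hzx : ∀ i, z ≠ x i) (hzy : ∀ i, z ≠ y i) :
    Tendsto (fun z' : ℂ => (z' - z) * Kl q (Fin.snoc x z) (Fin.snoc y z'))
      (nhdsWithin z {z}ᶜ)
      (nhds (-(z * (q - q⁻¹)) * fS q (fun _ : Fin 1 => z) y *
        fS q x (fun _ : Fin 1 => z) * Kl q x y)) :=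
  izergin_residue_general q z x y hq hzx hzy
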